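/- Let G be a group, let τ ∈ G be any element, and let F be a factorization in G whose ordered product is a central element of G. If F is Hurwitz equivalent to a factorization of the form τ·F' for some factorization F', then the factorization (F)_τ obtained from F by simultaneous conjugation of all entries by τ is Hurwitz equivalent to F. -/

import Mathlib

/-- A single Hurwitz move: replace two consecutive entries `(x, y)` by `(x y x⁻¹, x)`. -/
def HurwitzMove {G : Type*} [Group G] (F F' : List G) : Prop :=
  ∃ (l₁ l₂ : List G) (x y : G),
    F = l₁ ++ x :: y :: l₂ ∧ F' = l₁ ++ (x * y * x⁻¹) :: x :: l₂

/-- Hurwitz equivalence: the reflexive-symmetric-transitive closure of Hurwitz moves.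
(The symmetric closure accounts for the inverse move `(x, y) ↦ (y, y⁻¹ x y)`.) -/
def HurwitzEquiv {G : Type*} [Group G] : List G → List G → Prop :=
  Relation.EqvGen HurwitzMove

/-- `n`-fold concatenation of a factorization with itself. -/
def fpow {G : Type*} (F : List G) (n : ℕ) : List G :=
  (List.replicate n F).flatten

/-- Simultaneous conjugation of all entries of a factorization by `φ`: `τ ↦ φ⁻¹ τ φ`. -/
def fconj {G : Type*} [Group G] (F : List G) (φ : G) : List G :=
  F.map fun τ => φ⁻¹ * τ * φ

/-!
Conjugation by `τ` commutes with Hurwitz moves and fixes `τ`, so `(F)_τ ∼ τ·(F')_τ`. Sliding the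
leading `τ` to the end by moves `(τ, x) ↦ (τ x τ⁻¹, τ)` undoes the conjugation: `τ·(F')_τ ∼ F'·τ`.
Sliding it back by inverse moves conjugates it by `∏ F'`, which commutes with `τ` because `τ ∏ F'` is
central; hence `F'·τ ∼ τ·F' ∼ F`.
-/

theorem Relation.EqvGen.map {α β : Type*} {r : α → α → Prop} {s : β → β → Prop} (f : α → β)
    (hf : ∀ a b, r a b → s (f a) (f b)) {a b : α} (h : EqvGen r a b) :
    EqvGen s (f a) (f b) := by
  induction h with
  | rel a b hab => exact .rel _ _ (hf a b hab)
  | refl a => exact .refl _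
  | symm a b _ ih => exact .symm _ _ ih
  | trans a b c _ _ ihab ihbc => exact .trans _ _ _ ihab ihbc

section

variable {G : Type*} [Group G]

theorem HurwitzMove.cons {F F' : List G} (a : G) (h : HurwitzMove F F') :
    HurwitzMove (a :: F) (a :: F') := by
  obtain ⟨l₁, l₂, x, y, rfl, rfl⟩ := h
  exact ⟨a :: l₁, l₂, x, y, rfl, rfl⟩

theorem HurwitzMove.fconj {F F' : List G} (φ : G) (h : HurwitzMove F F') :
    HurwitzMove (_root_.fconj F φ) (_root_.fconj F' φ) := by
  obtain ⟨l₁, l₂, x, y, rfl, rfl⟩ := h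
  refine ⟨_root_.fconj l₁ φ, _root_.fconj l₂ φ, φ⁻¹ * x * φ, φ⁻¹ * y * φ,
    by simp [_root_.fconj], ?_⟩
  have hconj : φ⁻¹ * (x * y * x⁻¹) * φ =
      (φ⁻¹ * x * φ) * (φ⁻¹ * y * φ) * (φ⁻¹ * x * φ)⁻¹ := by group
  simp [_root_.fconj, hconj]

theorem HurwitzMove.prod_eq {F F' : List G} (h : HurwitzMove F F') : F.prod = F'.prod := by
  obtain ⟨l₁, l₂, x, y, rfl, rfl⟩ := h
  simp [mul_assoc]

theorem HurwitzEquiv.cons {F F' : List G} (a : G) (h : HurwitzEquiv F F') :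
    HurwitzEquiv (a :: F) (a :: F') :=
  Relation.EqvGen.map (a :: ·) (fun _ _ => HurwitzMove.cons a) h

theorem HurwitzEquiv.fconj {F F' : List G} (φ : G) (h : HurwitzEquiv F F') :
    HurwitzEquiv (_root_.fconj F φ) (_root_.fconj F' φ) :=
  Relation.EqvGen.map (_root_.fconj · φ) (fun _ _ => HurwitzMove.fconj φ) h

theorem HurwitzEquiv.prod_eq {F F' : List G} (h : HurwitzEquiv F F') : F.prod = F'.prod :=
  (InvImage.equivalence _ List.prod eq_equivalence).eqvGen_iff.mp
    (Relation.EqvGen.mono (fun _ _ => HurwitzMove.prod_eq) _ _ h)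

theorem hurwitzEquiv_cons_fconj_self (τ : G) (L : List G) :
    HurwitzEquiv (τ :: fconj L τ) (L ++ [τ]) := by
  induction L with
  | nil => exact .refl _
  | cons y L ih =>
    have hmove : HurwitzMove (τ :: (τ⁻¹ * y * τ) :: fconj L τ) (y :: τ :: fconj L τ) :=
      ⟨[], fconj L τ, τ, τ⁻¹ * y * τ, rfl, by simp [mul_assoc]⟩
    exact .trans _ _ _ (.rel _ _ hmove) (ih.cons y)

theorem hurwitzEquiv_cons_append_conj (τ : G) (L : List G) :
    HurwitzEquiv (τ :: L) (L ++ [L.prod⁻¹ * τ * L.prod]) := by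
  induction L generalizing τ with
  | nil => simpa using .refl _
  | cons y L ih =>
    have hmove : HurwitzMove (y :: (y⁻¹ * τ * y) :: L) (τ :: y :: L) :=
      ⟨[], L, y, y⁻¹ * τ * y, rfl, by simp [mul_assoc]⟩
    have hlast : (y :: L).prod⁻¹ * τ * (y :: L).prod = L.prod⁻¹ * (y⁻¹ * τ * y) * L.prod := by
      simp only [List.prod_cons]
      group
    rw [hlast]
    exact .trans _ _ _ (.symm _ _ (.rel _ _ hmove)) ((ih (y⁻¹ * τ * y)).cons y)

theorem hurwitzEquiv_cons_append_of_commute {τ : G} {L : List G} (h : Commute τ L.prod) :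
    HurwitzEquiv (τ :: L) (L ++ [τ]) := by
  have hslide := hurwitzEquiv_cons_append_conj τ L
  rwa [mul_assoc, h.eq, inv_mul_cancel_left] at hslide

end

/-- **Lemma 6.** If the product of a factorization `F` is central and `F ∼ τ·F'` for some
`F'`, then simultaneous conjugation of `F` by `τ` yields a Hurwitz equivalent
factorization. -/
theorem conj_equiv_of_central {G : Type*} [Group G] (τ : G) (F : List G)
    (hcentral : F.prod ∈ Subgroup.center G)
    (h : ∃ F' : List G, HurwitzEquiv F (τ :: F')) :
    HurwitzEquiv (fconj F τ) F := by
  obtain ⟨F', hF⟩ := h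
  have hprod : F.prod = τ * F'.prod := by simpa using hF.prod_eq
  have hcomm : Commute τ F'.prod := mul_left_cancel (a := τ) <| by
    simpa only [hprod, mul_assoc] using Subgroup.mem_center_iff.mp hcentral τ
  have hconj : HurwitzEquiv (fconj F τ) (τ :: fconj F' τ) := by
    simpa [fconj] using hF.fconj τ
  exact .trans _ _ _ hconj <| .trans _ _ _ (hurwitzEquiv_cons_fconj_self τ F') <|
    .symm _ _ <| .trans _ _ _ hF (hurwitzEquiv_cons_append_of_commute hcomm)
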